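/- arXiv:2008.07821 — 2 statements merged into one kernel-verified Lean document; each statement's English description precedes it below -/
import Mathlib

section
/- Existence of a next hop for unicast routing: let S be a finite set of sites in ℝ², C ∈ S, and D ∈ ℝ² with D ∉ V_C(S). Then there exists a site B ∈ S, B ≠ C, with dist(B, D) < dist(C, D) such that the boundary crossing point q of the segment [C, D] with V_C lies in V_B, i.e., some neighbor of C closer to D owns a point of the segment. -/
noncomputable abbrev E2 : Type := EuclideanSpace ℝ (Fin 2)

/-- A preconnected set containing a point of a closed set `s` and a point outside `s`
meets the frontier of `s`. -/
lemma preconnected_inter_frontier {s T : Set E2} (hT : IsPreconnected T)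
    (hcl : IsClosed s) {x y : E2} (hx : x ∈ T) (hy : y ∈ T) (hxs : x ∈ s) (hys : y ∉ s) :
    (T ∩ frontier s).Nonempty := by
  by_contra h
  rw [Set.not_nonempty_iff_eq_empty] at h
  have hsub : T ⊆ interior s ∪ (closure s)ᶜ := by
    intro z hz
    have hzf : z ∉ frontier s := fun hf => Set.eq_empty_iff_forall_notMem.mp h z ⟨hz, hf⟩
    by_cases hzc : z ∈ closure s
    · left
      by_contra hzi
      exact hzf ⟨hzc, hzi⟩
    · right; exact hzc
  have hxu : x ∈ interior s := by
    have hxf : x ∉ frontier s := fun hf => Set.eq_empty_iff_forall_notMem.mp h x ⟨hx, hf⟩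
    rcases hsub hx with h1 | h1
    · exact h1
    · exact absurd (subset_closure hxs) h1
  have hyv : y ∈ (closure s)ᶜ := by rwa [hcl.closure_eq]
  obtain ⟨z, _, hz1, hz2⟩ := hT (interior s) (closure s)ᶜ isOpen_interior
    (isClosed_closure.isOpen_compl) hsub ⟨x, hx, hxu⟩ ⟨y, hy, hyv⟩
  exact hz2 (subset_closure (interior_subset hz1))

/-- Existence of a next hop for unicast routing (Theorem 3.1): if the destination
`D` lies outside the cell of `C`, some other site `B`, strictly closer to `D`,
owns a boundary crossing point of the segment from `C` to `D`. -/
theorem exists_next_hop (S : Finset E2) (C : E2) (hC : C ∈ S) (D : E2)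
    (hD : D ∉ {p : E2 | ∀ t ∈ S, dist p C ≤ dist p t}) :
    ∃ B ∈ S, B ≠ C ∧ dist B D < dist C D ∧
      ∃ q ∈ segment ℝ C D,
        q ∈ frontier {p : E2 | ∀ t ∈ S, dist p C ≤ dist p t} ∧
        q ∈ {p : E2 | ∀ t ∈ S, dist p B ≤ dist p t} := by
  classical
  set V : Set E2 := {p : E2 | ∀ t ∈ S, dist p C ≤ dist p t} with hV
  have hVeq : V = ⋂ t ∈ S, {p : E2 | dist p C ≤ dist p t} := by
    ext p; simp [hV]
  have hVclosed : IsClosed V := by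
    rw [hVeq]
    exact isClosed_biInter fun t _ =>
      isClosed_le (Continuous.dist continuous_id continuous_const)
        (Continuous.dist continuous_id continuous_const)
  have hCV : C ∈ V := fun t _ => by simp [dist_nonneg]
  -- find the crossing point q
  obtain ⟨q, hqseg, hqf⟩ := preconnected_inter_frontier
    ((convex_segment C D).isPreconnected) hVclosed
    (left_mem_segment ℝ C D) (right_mem_segment ℝ C D) hCV hD
  have hqV : q ∈ V := hVclosed.frontier_subset hqf
  -- find a site B ≠ C with dist q B = dist q C
  have hB : ∃ B ∈ S, B ≠ C ∧ dist q B ≤ dist q C := by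
    by_contra h
    push_neg at h
    -- then q would be interior to V
    have hqint : q ∈ interior V := by
      apply interior_maximal (t := ⋂ B ∈ S.erase C, {p : E2 | dist p C < dist p B})
      · intro p hp t ht
        rcases eq_or_ne t C with rfl | htC
        · exact le_refl _
        · exact le_of_lt (Set.mem_iInter₂.mp hp t (Finset.mem_erase.mpr ⟨htC, ht⟩))
      · exact isOpen_biInter_finset fun t _ =>
          isOpen_lt (Continuous.dist continuous_id continuous_const)
            (Continuous.dist continuous_id continuous_const)
      · refine Set.mem_iInter₂.mpr fun t ht => ?_
        obtain ⟨htC, htS⟩ := Finset.mem_erase.mp ht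
        exact h t htS htC
    rw [frontier] at hqf
    exact hqf.2 hqint
  obtain ⟨B, hBS, hBC, hBle⟩ := hB
  have hqBC : dist q B = dist q C := le_antisymm hBle (hqV B hBS)
  have hqVB : q ∈ {p : E2 | ∀ t ∈ S, dist p B ≤ dist p t} := fun t ht => hqBC ▸ hqV t ht
  -- distances along the segment
  have hsum : dist C q + dist q D = dist C D := dist_add_dist_of_mem_segment hqseg
  have hle : dist B D ≤ dist C D := by
    calc dist B D ≤ dist B q + dist q D := dist_triangle B q D
    _ = dist C q + dist q D := by rw [dist_comm B q, hqBC, dist_comm q C]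
    _ = dist C D := hsum
  have hqD : q ≠ D := fun h => hD (h ▸ hqV)
  have hCD : C ≠ D := fun h => hD (h ▸ hCV)
  -- strictness: equality would force B = C
  have hlt : dist B D < dist C D := by
    rcases lt_or_eq_of_le hle with h | heq
    · exact h
    · exfalso
      have hwB : Wbtw ℝ B q D := by
        rw [← dist_add_dist_eq_iff]
        rw [dist_comm B q, hqBC, dist_comm q C]
        rw [hsum, heq]
      have hwC : Wbtw ℝ C q D := mem_segment_iff_wbtw.mp hqseg
      obtain ⟨t, ht, hteq⟩ := hwB.symm
      obtain ⟨s, hs, hseq⟩ := hwC.symm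
      rw [AffineMap.lineMap_apply] at hteq hseq
      -- q - D = t • (B - D) = s • (C - D)
      have hBD : B ≠ D := by
        intro h
        have h0 : dist C D = 0 := by rw [← heq, h, dist_self]
        exact hCD (dist_eq_zero.mp h0)
      have htB : q - D = t • (B - D) := by
        have := hteq
        simp only [vsub_eq_sub, vadd_eq_add] at this
        rw [← this]; abel
      have hsC : q - D = s • (C - D) := by
        have := hseq
        simp only [vsub_eq_sub, vadd_eq_add] at this
        rw [← this]; abel
      have hnorm : ‖q - D‖ = t * ‖B - D‖ := by
        rw [htB, norm_smul, Real.norm_eq_abs, abs_of_nonneg ht.1]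
      have hnorm' : ‖q - D‖ = s * ‖C - D‖ := by
        rw [hsC, norm_smul, Real.norm_eq_abs, abs_of_nonneg hs.1]
      have hBDnorm : ‖B - D‖ = ‖C - D‖ := by
        rw [← dist_eq_norm, ← dist_eq_norm, heq]
      have hCDpos : (0:ℝ) < ‖C - D‖ := by
        rw [← dist_eq_norm]
        exact dist_pos.mpr hCD
      have hts : t = s := by
        rw [hBDnorm] at hnorm
        have := hnorm.symm.trans hnorm'
        exact mul_right_cancel₀ (ne_of_gt hCDpos) this
      have htpos : t ≠ 0 := by
        intro h
        apply hqD
        rw [h, zero_smul] at htB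
        have := sub_eq_zero.mp htB
        exact this
      have : B - D = C - D := by
        have h1 : t • (B - D) = t • (C - D) := by rw [← htB, hts, ← hsC]
        exact smul_right_injective _ htpos h1
      exact hBC (sub_left_injective this)
  exact ⟨B, hBS, hBC, hlt, q, hqseg, hqf, hqVB⟩
end

section
/- A strictly closer neighbor exists when the current site is not nearest: let S be a finite set of sites in ℝ², C ∈ S, and D ∈ ℝ². If there exists some s ∈ S with dist(s, D) < dist(C, D), then among the sites t whose cells share a boundary point with V_C along the segment from C to D, there is one with dist(t, D) < dist(C, D). More weakly: if C is not a nearest site to D in S, then D ∉ V_C(S). -/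
lemma key_aff (C D u : E2) (l : ℝ) :
    dist (C + l • (D - C)) C ^ 2 - dist (C + l • (D - C)) u ^ 2
      = (1 - l) * (0 - dist C u ^ 2) + l * (dist C D ^ 2 - dist u D ^ 2) := by
  have h : ∀ x y : E2, dist x y ^ 2 = ‖x - y‖ ^ 2 := fun x y => by rw [dist_eq_norm]
  simp only [h]
  have e1 : C + l • (D - C) - C = l • (D - C) := by abel
  have e2 : C + l • (D - C) - u = (C - u) + l • (D - C) := by abel
  have e3 : C - D = -(D - C) := by abel
  have e4 : u - D = (u - C) - (D - C) := by abel
  have e5 : C - u = -(u - C) := by abel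
  rw [e1, e2, e3, e4, e5]
  rw [norm_add_sq_real, norm_sub_sq_real, norm_neg, norm_neg, norm_smul,
    real_inner_smul_right, inner_neg_left]
  simp [mul_pow, abs_mul_abs_self]
  ring_nf

lemma dist_le_of_sq_le_sq {a b : ℝ} (ha : 0 ≤ a) (hb : 0 ≤ b) (h : a ^ 2 ≤ b ^ 2) : a ≤ b := by
  nlinarith

/-- If the current site `C` is not nearest to `D`, then some site whose cell
shares with `V_C` a point of the segment from `C` to `D` is strictly closer to
`D`; more weakly, `D` does not belong to `V_C`. -/
theorem not_nearest_next_hop (S : Finset E2) (C : E2) (hC : C ∈ S) (D : E2)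
    (hcloser : ∃ s ∈ S, dist s D < dist C D) :
    (∃ t ∈ S,
        (∃ q ∈ segment ℝ C D,
          q ∈ {p : E2 | ∀ u ∈ S, dist p C ≤ dist p u} ∧
          q ∈ {p : E2 | ∀ u ∈ S, dist p t ≤ dist p u}) ∧
        dist t D < dist C D) ∧
    D ∉ {p : E2 | ∀ t ∈ S, dist p C ≤ dist p t} := by
  obtain ⟨s, hs, hsd⟩ := hcloser
  constructor
  · -- main part
    set T : Finset E2 := S.filter (fun u => dist u D < dist C D) with hT
    have hTne : T.Nonempty := ⟨s, by simp [hT, hs, hsd]⟩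
    -- b u > 0 for u ∈ T
    set b : E2 → ℝ := fun u => (dist C D ^ 2 - dist u D ^ 2) + dist C u ^ 2 with hb
    set μ : E2 → ℝ := fun u => dist C u ^ 2 / b u with hμ
    have hbpos : ∀ u ∈ T, 0 < b u := by
      intro u hu
      rw [hT, Finset.mem_filter] at hu
      have : dist u D ^ 2 < dist C D ^ 2 := by
        apply pow_lt_pow_left₀ hu.2 dist_nonneg; norm_num
      have := sq_nonneg (dist C u)
      simp only [hb]; nlinarith
    obtain ⟨t, htT, htmin⟩ := T.exists_min_image μ hTne
    have htS : t ∈ S := (Finset.mem_filter.mp htT).1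
    have htd : dist t D < dist C D := (Finset.mem_filter.mp htT).2
    have hbt : 0 < b t := hbpos t htT
    have hμt0 : 0 ≤ μ t := div_nonneg (sq_nonneg _) hbt.le
    have hμt1 : μ t ≤ 1 := by
      rw [hμ, div_le_one hbt]
      have : dist t D ^ 2 < dist C D ^ 2 := by
        apply pow_lt_pow_left₀ htd dist_nonneg; norm_num
      simp only [hb]; nlinarith
    set q : E2 := C + μ t • (D - C) with hq
    -- F u (μ t) ≤ 0 for all u ∈ S
    have hF : ∀ u ∈ S, dist q C ^ 2 - dist q u ^ 2 ≤ 0 := by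
      intro u hu
      rw [hq, key_aff]
      by_cases huT : u ∈ T
      · -- (1 - λ)(-a) + λ(f1) = -a + λ b ≤ -a + μ_u b = 0
        have hbu := hbpos u huT
        have hle := htmin u huT
        have heq : μ u * b u = dist C u ^ 2 := by
          rw [hμ]; field_simp
        have h2 : μ t * (dist C D ^ 2 - dist u D ^ 2 + dist C u ^ 2) ≤ dist C u ^ 2 := by
          calc μ t * (dist C D ^ 2 - dist u D ^ 2 + dist C u ^ 2) = μ t * b u := rfl
            _ ≤ μ u * b u := mul_le_mul_of_nonneg_right hle hbu.le
            _ = dist C u ^ 2 := heq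
        nlinarith [h2]
      · have huf : ¬ dist u D < dist C D := by
          intro h; exact huT (Finset.mem_filter.mpr ⟨hu, h⟩)
        push_neg at huf
        have : dist C D ^ 2 - dist u D ^ 2 ≤ 0 := by
          have : dist C D ^ 2 ≤ dist u D ^ 2 := by
            apply pow_le_pow_left₀ dist_nonneg huf
          linarith
        have ha := sq_nonneg (dist C u)
        nlinarith
    have hFt : dist q C ^ 2 - dist q t ^ 2 = 0 := by
      rw [hq, key_aff]
      have : μ t * b t = dist C t ^ 2 := by rw [hμ]; field_simp
      simp only [hb] at this ⊢
      nlinarith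
    refine ⟨t, htS, ⟨q, ?_, ?_, ?_⟩, htd⟩
    · rw [segment_eq_image']
      exact ⟨μ t, ⟨hμt0, hμt1⟩, rfl⟩
    · intro u hu
      exact dist_le_of_sq_le_sq dist_nonneg dist_nonneg (by linarith [hF u hu])
    · intro u hu
      exact dist_le_of_sq_le_sq dist_nonneg dist_nonneg (by linarith [hF u hu, hFt])
  · intro hD
    have := hD s hs
    rw [dist_comm D s, dist_comm D C] at this
    linarith
end
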